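/- arXiv:1702.03727 — 3 statements merged into one kernel-verified Lean document; each statement's English description precedes it below -/
import Mathlib

section
/- Let g : ℝ → ℝ be continuous with g(z)·z < 0 for all z ≠ 0, and let u ∈ C²(ℝ^N) be a solution of -Δu = g(u) which is localized (u(x) → 0 as |x| → ∞). Then u ≡ 0. -/
open MeasureTheory Filter

/-- The Laplacian of `u : ℝ^N → ℝ`, as the sum of second directional derivatives
along the standard basis vectors. -/
noncomputable def lap {N : ℕ} (u : EuclideanSpace ℝ (Fin N) → ℝ)
    (x : EuclideanSpace ℝ (Fin N)) : ℝ :=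
  ∑ i : Fin N, iteratedFDeriv ℝ 2 u x ![EuclideanSpace.single i (1 : ℝ),
    EuclideanSpace.single i (1 : ℝ)]

/-!
If `u` were positive somewhere, then, since `u → 0` at infinity, it would attain a positive global
maximum at some `x₀`. Restricting `u` to lines through `x₀` and applying the one-variable second
derivative test shows that every pure second derivative of `u` at `x₀` is `≤ 0`, so `Δu(x₀) ≤ 0`;
but `Δu(x₀) = -g(u(x₀)) > 0`. The same argument applied to `-u` rules out negative values.
-/

open Topology

theorem IsLocalMax.deriv_deriv_nonpos {f : ℝ → ℝ} {a : ℝ} (h : IsLocalMax f a)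
    (hc : ContinuousAt f a) : deriv (deriv f) a ≤ 0 := by
  by_contra! hpos
  have hmin : IsLocalMin f a := isLocalMin_of_deriv_deriv_pos hpos h.deriv_eq_zero hc
  have hconst : f =ᶠ[𝓝 a] fun _ => f a :=
    (h.and hmin).mono fun _ hx => le_antisymm hx.1 hx.2
  have : deriv (deriv f) a = 0 := by
    rw [hconst.deriv.deriv_eq, deriv_const']
    simp
  exact hpos.ne' this

section Line

variable {E F : Type*} [NormedAddCommGroup E] [NormedSpace ℝ E]
  [NormedAddCommGroup F] [NormedSpace ℝ F]

theorem iteratedDeriv_two_comp_line {u : E → F} (hu : ContDiff ℝ 2 u) (x v : E) :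
    iteratedDeriv 2 (fun t : ℝ => u (x + t • v)) 0 = iteratedFDeriv ℝ 2 u x ![v, v] := by
  have hshift : ContDiff ℝ 2 fun z => u (x + z) := hu.comp (contDiff_const.add contDiff_id)
  have hcomp := (ContinuousLinearMap.toSpanSingleton ℝ v).iteratedFDeriv_comp_right hshift 0
    le_rfl
  rw [iteratedDeriv_eq_iteratedFDeriv]
  simp only [Function.comp_def, ContinuousLinearMap.toSpanSingleton_apply] at hcomp
  rw [hcomp, ContinuousMultilinearMap.compContinuousLinearMap_apply,
    iteratedFDeriv_comp_add_left]
  simp only [ContinuousLinearMap.toSpanSingleton_apply, one_smul, zero_smul, add_zero]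
  congr 1
  ext i
  fin_cases i <;> rfl

theorem IsLocalMax.iteratedFDeriv_two_nonpos {u : E → ℝ} {x : E} (h : IsLocalMax u x)
    (hu : ContDiff ℝ 2 u) (v : E) : iteratedFDeriv ℝ 2 u x ![v, v] ≤ 0 := by
  have h₀ : IsLocalMax u ((fun t : ℝ => x + t • v) 0) := by simpa using h
  have hline : IsLocalMax (fun t : ℝ => u (x + t • v)) 0 :=
    IsLocalMax.comp_continuous (g := fun t : ℝ => x + t • v) h₀ (by fun_prop)
  rw [← iteratedDeriv_two_comp_line hu, iteratedDeriv_succ, iteratedDeriv_one]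
  exact hline.deriv_deriv_nonpos (hu.continuous.comp (by fun_prop)).continuousAt

end Line

variable {N : ℕ}

theorem lap_neg (u : EuclideanSpace ℝ (Fin N) → ℝ) (x : EuclideanSpace ℝ (Fin N)) :
    lap (-u) x = -lap u x := by
  simp only [lap, iteratedFDeriv_neg_apply, neg_apply, Finset.sum_neg_distrib]

theorem IsLocalMax.lap_nonpos {u : EuclideanSpace ℝ (Fin N) → ℝ} {x : EuclideanSpace ℝ (Fin N)}
    (h : IsLocalMax u x) (hu : ContDiff ℝ 2 u) : lap u x ≤ 0 :=
  Finset.sum_nonpos fun _ _ => h.iteratedFDeriv_two_nonpos hu _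

theorem nonpos_of_lap_pos {u : EuclideanSpace ℝ (Fin N) → ℝ} (hu : ContDiff ℝ 2 u)
    (hloc : Tendsto u (cocompact (EuclideanSpace ℝ (Fin N))) (𝓝 0))
    (hlap : ∀ x, 0 < u x → 0 < lap u x) (x : EuclideanSpace ℝ (Fin N)) : u x ≤ 0 := by
  by_contra! hx
  obtain ⟨x₀, hx₀⟩ := hu.continuous.exists_forall_ge' x (hloc.eventually (eventually_le_nhds hx))
  have hmax : IsLocalMax u x₀ := Filter.Eventually.of_forall hx₀
  exact (hlap x₀ (hx.trans_le (hx₀ x))).not_ge (hmax.lap_nonpos hu)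

theorem stmt_1_general {N : ℕ} (g : ℝ → ℝ)
    (hsign : ∀ z : ℝ, z ≠ 0 → g z * z < 0)
    (u : EuclideanSpace ℝ (Fin N) → ℝ) (hu : ContDiff ℝ 2 u)
    (heq : ∀ x, -lap u x = g (u x))
    (hloc : Tendsto u (cocompact (EuclideanSpace ℝ (Fin N))) (nhds 0)) :
    ∀ x, u x = 0 := by
  have hle : ∀ x, u x ≤ 0 := nonpos_of_lap_pos hu hloc fun x hx => by
    have := neg_of_mul_neg_left (hsign (u x) hx.ne') hx.le
    linarith [heq x]
  have hloc_neg : Tendsto (-u) (cocompact _) (𝓝 0) := by rw [← neg_zero]; exact hloc.neg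
  have hge : ∀ x, (-u) x ≤ 0 := nonpos_of_lap_pos hu.neg hloc_neg fun x hx => by
    rw [Pi.neg_apply, neg_pos] at hx
    have := pos_of_mul_neg_left (hsign (u x) hx.ne) hx.le
    rw [lap_neg]
    linarith [heq x]
  exact fun x => le_antisymm (hle x) (neg_nonpos.mp (hge x))

/-- If `g` is continuous and `g(z)·z < 0` for `z ≠ 0`, then any localized `C²` solution of
`-Δu = g(u)` on `ℝ^N` is identically zero. -/
theorem stmt_1 {N : ℕ} (hN : 1 ≤ N) (g : ℝ → ℝ) (hg : Continuous g)
    (hsign : ∀ z : ℝ, z ≠ 0 → g z * z < 0)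
    (u : EuclideanSpace ℝ (Fin N) → ℝ) (hu : ContDiff ℝ 2 u)
    (heq : ∀ x, -lap u x = g (u x))
    (hloc : Tendsto u (cocompact (EuclideanSpace ℝ (Fin N))) (nhds 0)) :
    ∀ x, u x = 0 :=
  stmt_1_general g hsign u hu heq hloc
end

section
/- Let g : ℝ → ℝ be C¹, odd, with g negative on (α₀, ∞) for some α₀ > 0. Let u solve -u'' = g(u) on its maximal interval [0, T) with u(0) = α > α₀ and u'(0) = 0. Then u is strictly increasing on (0, T) and strictly convex on (0, T); in particular u(r) > α₀ for all r ∈ (0, T). -/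
/-- If `g` is `C¹`, odd and negative on `(α₀,∞)`, and `u` solves `-u'' = g(u)` on `[0,T)`
with `u(0) = α > α₀`, `u'(0) = 0`, then `u` is strictly increasing and strictly convex on
`(0,T)`, and `u > α₀` on `(0,T)`. -/
theorem stmt_3 (g : ℝ → ℝ) (α₀ α T : ℝ) (hα₀ : 0 < α₀) (hα : α₀ < α) (hT : 0 < T)
    (hg : ContDiff ℝ 1 g) (hodd : ∀ z, g (-z) = -g z)
    (hgneg : ∀ z, α₀ < z → g z < 0)
    (u : ℝ → ℝ) (hu : ContDiffOn ℝ 2 u (Set.Ico 0 T))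
    (heq : ∀ r ∈ Set.Ico (0:ℝ) T, -deriv (deriv u) r = g (u r))
    (h0 : u 0 = α) (h0' : deriv u 0 = 0) :
    StrictMonoOn u (Set.Ioo 0 T) ∧ StrictConvexOn ℝ (Set.Ioo 0 T) u ∧
      ∀ r ∈ Set.Ioo (0:ℝ) T, α₀ < u r := by
  -- basic continuity facts
  have hucont : ContinuousOn u (Set.Ico 0 T) := hu.continuousOn
  have huIoo : ContDiffOn ℝ 2 u (Set.Ioo 0 T) := hu.mono Set.Ioo_subset_Ico_self
  have hdcontIoo : ContinuousOn (deriv u) (Set.Ioo 0 T) :=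
    huIoo.continuousOn_deriv_of_isOpen isOpen_Ioo (by norm_num)
  -- second derivative formula and sign
  have hdd : ∀ r ∈ Set.Ico (0:ℝ) T, α₀ < u r → 0 < deriv (deriv u) r := by
    intro r hr hur
    have := heq r hr
    nlinarith [hgneg (u r) hur]
  -- at 0 : deriv (deriv u) 0 = -g α > 0
  have hd0 : deriv (deriv u) 0 = -g (u 0) := by
    have := heq 0 ⟨le_refl 0, hT⟩; linarith
  have hgα : g α < 0 := hgneg α hα
  have hd0pos : 0 < deriv (deriv u) 0 := by rw [hd0, h0]; linarith
  have hdiff0 : DifferentiableAt ℝ (deriv u) 0 := by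
    by_contra h
    rw [deriv_zero_of_not_differentiableAt h] at hd0pos
    exact lt_irrefl 0 hd0pos
  have hdcont0 : ContinuousAt (deriv u) 0 := hdiff0.continuousAt
  have hdcont : ContinuousOn (deriv u) (Set.Ico 0 T) := by
    intro x hx
    rcases eq_or_lt_of_le hx.1 with h | h
    · exact (h ▸ hdcont0).continuousWithinAt
    · exact (hdcontIoo.continuousAt (isOpen_Ioo.mem_nhds ⟨h, hx.2⟩)).continuousWithinAt
  -- deriv u is positive slightly to the right of 0
  have hslope : ∃ δ > 0, ∀ t : ℝ, 0 < t → t < δ → 0 < deriv u t := by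
    have hda : HasDerivAt (deriv u) (deriv (deriv u) 0) 0 := hdiff0.hasDerivAt
    have htend := hasDerivAt_iff_tendsto_slope.mp hda
    have hev : ∀ᶠ t in nhdsWithin 0 {(0:ℝ)}ᶜ, 0 < slope (deriv u) 0 t :=
      htend.eventually (eventually_gt_nhds hd0pos)
    rw [eventually_nhdsWithin_iff, Metric.eventually_nhds_iff] at hev
    obtain ⟨δ, hδ, hev⟩ := hev
    refine ⟨δ, hδ, fun t ht htδ => ?_⟩
    have hs := hev (show dist t 0 < δ by
      rw [Real.dist_eq, sub_zero, abs_of_pos ht]; exact htδ)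
      (by simp [ne_of_gt ht])
    have hsl : slope (deriv u) 0 t = t⁻¹ * deriv u t := by simp [slope, h0']
    rw [hsl] at hs
    have := mul_pos ht hs
    rwa [mul_inv_cancel_left₀ (ne_of_gt ht)] at this
  have hudiff : DifferentiableOn ℝ u (Set.Ico 0 T) := hu.differentiableOn (by norm_num)
  -- the key bootstrap claim
  have key : ∀ r ∈ Set.Ico (0:ℝ) T, α ≤ u r ∧ 0 ≤ deriv u r := by
    by_contra hK
    push_neg at hK
    obtain ⟨r₀, hr₀, hr₀'⟩ := hK
    set K : Set ℝ := {t | t ∈ Set.Ico (0:ℝ) T ∧ ¬(α ≤ u t ∧ 0 ≤ deriv u t)} with hKdef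
    have hKne : K.Nonempty := ⟨r₀, hr₀, by push_neg; exact hr₀'⟩
    have hKbdd : BddBelow K := ⟨0, fun t ht => ht.1.1⟩
    set τ := sInf K with hτ
    have hτ0 : 0 ≤ τ := le_csInf hKne fun t ht => ht.1.1
    have hτT : τ < T := lt_of_le_of_lt (csInf_le hKbdd hKne.choose_spec) hKne.choose_spec.1.2
    -- a positive lower bound for τ via the slope argument
    obtain ⟨δ, hδ, hslp⟩ := hslope
    set b₀ := min (δ/2) (T/2) with hb₀
    have hb₀pos : 0 < b₀ := lt_min (by linarith) (by linarith)
    have hb₀T : b₀ < T := lt_of_le_of_lt (min_le_right _ _) (by linarith)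
    have hb₀δ : b₀ < δ := lt_of_le_of_lt (min_le_left _ _) (by linarith)
    -- on [0, b₀], u is monotone so u ≥ α and deriv u ≥ 0
    have hmono0 : MonotoneOn u (Set.Icc 0 b₀) := by
      apply monotoneOn_of_deriv_nonneg (convex_Icc 0 b₀)
        (hucont.mono (Set.Icc_subset_Ico_right hb₀T |>.trans (by
          intro x hx; exact ⟨hx.1, hx.2⟩)))
      · intro x hx
        rw [interior_Icc] at hx
        exact (hudiff x ⟨le_of_lt hx.1, hx.2.trans hb₀T⟩).mono
          (fun y hy => by
            rw [interior_Icc] at hy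
            exact ⟨le_of_lt hy.1, hy.2.trans hb₀T⟩)
      · intro x hx
        rw [interior_Icc] at hx
        exact le_of_lt (hslp x hx.1 (hx.2.trans hb₀δ))
    have hKlow : ∀ t ∈ K, b₀ ≤ t := by
      intro t ht
      by_contra hlt
      push_neg at hlt
      apply ht.2
      constructor
      · have := hmono0 (Set.left_mem_Icc.2 (le_of_lt hb₀pos)) ⟨ht.1.1, le_of_lt hlt⟩ ht.1.1
        rwa [h0] at this
      · rcases eq_or_lt_of_le ht.1.1 with h | h
        · rw [← h, h0']
        · exact le_of_lt (hslp t h (hlt.trans hb₀δ))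
    have hτpos : 0 < τ := lt_of_lt_of_le hb₀pos (le_csInf hKne hKlow)
    -- u ≥ α and deriv u ≥ 0 on [0, τ)
    have hbefore : ∀ s, 0 ≤ s → s < τ → α ≤ u s ∧ 0 ≤ deriv u s := by
      intro s hs hsτ
      by_contra h
      have : s ∈ K := ⟨⟨hs, hsτ.trans hτT⟩, h⟩
      exact absurd (csInf_le hKbdd this) (not_le.2 hsτ)
    -- by continuity, u τ ≥ α and deriv u τ ≥ 0
    have hτmemIoo : τ ∈ Set.Ioo (0:ℝ) T := ⟨hτpos, hτT⟩
    have hτmem : τ ∈ Set.Ico (0:ℝ) T := ⟨hτ0, hτT⟩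
    have huτcont : ContinuousAt u τ :=
      (hucont.mono Set.Ioo_subset_Ico_self).continuousAt (isOpen_Ioo.mem_nhds hτmemIoo)
    have hduτcont : ContinuousAt (deriv u) τ :=
      (hdcontIoo.mono (fun x hx => hx)).continuousAt (isOpen_Ioo.mem_nhds hτmemIoo)
    have huτ : α ≤ u τ := by
      have ht : Filter.Tendsto u (nhdsWithin τ (Set.Iio τ)) (nhds (u τ)) :=
        huτcont.continuousWithinAt.tendsto
      refine ge_of_tendsto ht ?_
      filter_upwards [self_mem_nhdsWithin, eventually_nhdsWithin_of_eventually_nhds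
        (isOpen_Ioi.eventually_mem hτpos)] with s hs hs'
      exact (hbefore s (le_of_lt hs') hs).1
    have hduτ : 0 ≤ deriv u τ := by
      have ht : Filter.Tendsto (deriv u) (nhdsWithin τ (Set.Iio τ)) (nhds (deriv u τ)) :=
        hduτcont.continuousWithinAt.tendsto
      refine ge_of_tendsto ht ?_
      filter_upwards [self_mem_nhdsWithin, eventually_nhdsWithin_of_eventually_nhds
        (isOpen_Ioi.eventually_mem hτpos)] with s hs hs'
      exact (hbefore s (le_of_lt hs') hs).2
    -- find b > τ with u > α₀ on [τ, b]
    have huτα₀ : α₀ < u τ := lt_of_lt_of_le hα huτ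
    have hopen : ∀ᶠ x in nhds τ, α₀ < u x := huτcont.eventually (eventually_gt_nhds huτα₀)
    rw [Metric.eventually_nhds_iff] at hopen
    obtain ⟨ε, hε, hball⟩ := hopen
    set b := min (τ + ε/2) ((τ + T)/2) with hb
    have hbτ : τ < b := lt_min (by linarith) (by linarith)
    have hbT : b < T := lt_of_le_of_lt (min_le_right _ _) (by linarith)
    have hsub : Set.Icc τ b ⊆ Set.Ioo 0 T := fun x hx => ⟨lt_of_lt_of_le hτpos hx.1,
      lt_of_le_of_lt hx.2 hbT⟩
    have hα₀on : ∀ x ∈ Set.Icc τ b, α₀ < u x := by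
      intro x hx
      apply hball
      have h1 : x - τ < ε := by
        have : x ≤ τ + ε/2 := hx.2.trans (min_le_left _ _)
        linarith
      have h2 : 0 ≤ x - τ := by linarith [hx.1]
      rw [Real.dist_eq, abs_of_nonneg h2]
      exact h1
    -- deriv u strictly monotone on [τ, b]
    have hmonod : StrictMonoOn (deriv u) (Set.Icc τ b) := by
      apply strictMonoOn_of_deriv_pos (convex_Icc τ b) (hdcontIoo.mono hsub)
      intro x hx
      rw [interior_Icc] at hx
      have hxI := hsub (Set.Ioo_subset_Icc_self hx)
      exact hdd x ⟨le_of_lt hxI.1, hxI.2⟩ (hα₀on x (Set.Ioo_subset_Icc_self hx))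
    have hdnonneg : ∀ x ∈ Set.Icc τ b, 0 ≤ deriv u x := by
      intro x hx
      rcases eq_or_lt_of_le hx.1 with h | h
      · rwa [← h]
      · exact le_of_lt (lt_of_le_of_lt hduτ
          (hmonod (Set.left_mem_Icc.2 (le_of_lt hbτ)) hx h))
    have hmonou : MonotoneOn u (Set.Icc τ b) := by
      apply monotoneOn_of_deriv_nonneg (convex_Icc τ b) (hucont.mono
        (hsub.trans Set.Ioo_subset_Ico_self))
      · intro x hx
        rw [interior_Icc] at hx
        have hxI := hsub (Set.Ioo_subset_Icc_self hx)
        exact (hudiff x ⟨le_of_lt hxI.1, hxI.2⟩).mono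
          (fun y hy => by
            rw [interior_Icc] at hy
            exact Set.Ioo_subset_Ico_self (hsub (Set.Ioo_subset_Icc_self hy)))
      · intro x hx
        rw [interior_Icc] at hx
        exact hdnonneg x (Set.Ioo_subset_Icc_self hx)
    -- so no point of [τ, b] is in K : contradiction with τ = sInf K
    have hnone : ∀ t ∈ K, b < t := by
      intro t ht
      by_contra hlt
      push_neg at hlt
      rcases lt_or_ge t τ with h | h
      · exact absurd (csInf_le hKbdd ht) (not_le.2 h)
      · apply ht.2
        refine ⟨le_trans huτ ?_, hdnonneg t ⟨h, hlt⟩⟩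
        exact hmonou (Set.left_mem_Icc.2 (le_of_lt hbτ)) ⟨h, hlt⟩ h
    have : b ≤ τ := le_csInf hKne fun t ht => le_of_lt (hnone t ht)
    linarith
  -- consequences
  have hα₀all : ∀ r ∈ Set.Ico (0:ℝ) T, α₀ < u r := fun r hr =>
    lt_of_lt_of_le hα (key r hr).1
  have hddpos : ∀ r ∈ Set.Ico (0:ℝ) T, 0 < deriv (deriv u) r := fun r hr =>
    hdd r hr (hα₀all r hr)
  -- deriv u strictly monotone on [0, T), hence positive on (0, T)
  have hmonod : StrictMonoOn (deriv u) (Set.Ico 0 T) := by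
    apply strictMonoOn_of_deriv_pos (convex_Ico 0 T) hdcont
    intro x hx
    rw [interior_Ico] at hx
    exact hddpos x ⟨le_of_lt hx.1, hx.2⟩
  have hdpos : ∀ r ∈ Set.Ioo (0:ℝ) T, 0 < deriv u r := by
    intro r hr
    have := hmonod ⟨le_refl 0, hT⟩ ⟨le_of_lt hr.1, hr.2⟩ hr.1
    rwa [h0'] at this
  refine ⟨?_, ?_, fun r hr => hα₀all r ⟨le_of_lt hr.1, hr.2⟩⟩
  · apply strictMonoOn_of_deriv_pos (convex_Ioo 0 T)
      (hucont.mono Set.Ioo_subset_Ico_self)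
    intro x hx
    rw [interior_Ioo] at hx
    exact hdpos x hx
  · apply strictConvexOn_of_deriv2_pos (convex_Ioo 0 T)
      (hucont.mono Set.Ioo_subset_Ico_self)
    intro x hx
    rw [interior_Ioo] at hx
    simpa [Function.iterate_succ, Function.comp] using
      hddpos x ⟨le_of_lt hx.1, hx.2⟩
end

section
/- Let g : ℝ → ℝ be C¹, odd, with g'(0) > 0 and g > 0 on (0, α₀). Let u solve u'' + ((N-1)/r)u' + g(u) = 0 on (0,∞) with u(0) = α ∈ (0, α₀), u'(0) = 0, N ≥ 2, and suppose 0 < u(r) < α₀ on [0, R]. Then u'(r) < 0 for all r ∈ (0, R], i.e. u is strictly decreasing as long as it remains in (0, α₀). -/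
/-! The flux `r ^ (N - 1) * u'(r)` has derivative `-r ^ (N - 1) * g(u(r))` by the radial equation,
which is negative while `0 < u < α₀`. Since the flux vanishes at `r = 0`, it is negative on `(0, R]`,
and hence so is `u'`. -/

open Set

theorem hasDerivAt_pow_mul_of_radial_eq {m : ℕ} {w : ℝ → ℝ} {w' c r : ℝ} (hr : r ≠ 0)
    (hw : HasDerivAt w w' r) (heq : w' + m / r * w r + c = 0) :
    HasDerivAt (fun s => s ^ m * w s) (-(r ^ m * c)) r := by
  refine ((hasDerivAt_pow m r).mul hw).congr_deriv ?_
  rw [show w' = -(m / r * w r + c) by linarith]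
  rcases m with _ | m
  · simp
  · rw [Nat.add_sub_cancel]
    field_simp
    ring

theorem neg_of_hasDerivAt_pow_mul_neg {m : ℕ} (hm : m ≠ 0) {w v' : ℝ → ℝ} {R : ℝ}
    (hw : ContinuousOn w (Icc 0 R))
    (hv : ∀ s ∈ Ioo 0 R, HasDerivAt (fun s => s ^ m * w s) (v' s) s)
    (hv' : ∀ s ∈ Ioo 0 R, v' s < 0) :
    ∀ r ∈ Ioc 0 R, w r < 0 := by
  intro r ⟨hr, hrR⟩
  have hanti : StrictAntiOn (fun s => s ^ m * w s) (Icc 0 R) := by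
    refine strictAntiOn_of_hasDerivWithinAt_neg (f' := v') (convex_Icc 0 R)
      ((continuousOn_pow m).mul hw) (fun s hs => ?_) (fun s hs => ?_)
    all_goals rw [interior_Icc] at hs
    exacts [(hv s hs).hasDerivWithinAt, hv' s hs]
  have hflux : r ^ m * w r < 0 := by
    simpa [hm] using hanti (left_mem_Icc.mpr (hr.le.trans hrR)) ⟨hr.le, hrR⟩ hr
  exact neg_of_mul_neg_right hflux (pow_pos hr m).le

theorem stmt_5_general (N : ℕ) (hN : 2 ≤ N) (g : ℝ → ℝ) (α₀ R : ℝ)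
    (hgpos : ∀ z, 0 < z → z < α₀ → 0 < g z)
    (u : ℝ → ℝ) (hu : ContDiff ℝ 2 u)
    (heq : ∀ r, 0 < r → deriv (deriv u) r + ((N : ℝ) - 1) / r * deriv u r + g (u r) = 0)
    (hbetween : ∀ r ∈ Set.Icc (0:ℝ) R, 0 < u r ∧ u r < α₀) :
    ∀ r ∈ Set.Ioc (0:ℝ) R, deriv u r < 0 := by
  have hu' : Differentiable ℝ (deriv u) := hu.differentiable_deriv_two
  have hcast : ((N - 1 : ℕ) : ℝ) = (N : ℝ) - 1 := by rw [Nat.cast_sub (by omega), Nat.cast_one]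
  refine neg_of_hasDerivAt_pow_mul_neg (m := N - 1) (by omega) hu'.continuous.continuousOn
    (fun s hs => hasDerivAt_pow_mul_of_radial_eq hs.1.ne' (hu' s).hasDerivAt
      (by rw [hcast]; exact heq s hs.1)) (fun s hs => ?_)
  obtain ⟨hu_pos, hu_lt⟩ := hbetween s (Ioo_subset_Icc_self hs)
  exact neg_neg_of_pos (mul_pos (pow_pos hs.1 _) (hgpos _ hu_pos hu_lt))

/-- For the radial equation `u'' + ((N-1)/r)u' + g(u) = 0`, `N ≥ 2`, with `u(0)=α ∈ (0,α₀)`,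
`u'(0)=0`, and `g > 0` on `(0,α₀)`: as long as `0 < u < α₀` on `[0,R]`, the solution is
strictly decreasing, i.e. `u' < 0` on `(0,R]`. -/
theorem stmt_5 (N : ℕ) (hN : 2 ≤ N) (g : ℝ → ℝ) (α₀ α R : ℝ)
    (hα₀ : 0 < α₀) (hα : 0 < α) (hαα₀ : α < α₀) (hR : 0 < R)
    (hg : ContDiff ℝ 1 g) (hodd : ∀ z, g (-z) = -g z)
    (hg'0 : 0 < deriv g 0) (hgpos : ∀ z, 0 < z → z < α₀ → 0 < g z)
    (u : ℝ → ℝ) (hu : ContDiff ℝ 2 u)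
    (heq : ∀ r, 0 < r → deriv (deriv u) r + ((N : ℝ) - 1) / r * deriv u r + g (u r) = 0)
    (h0 : u 0 = α) (h0' : deriv u 0 = 0)
    (hbetween : ∀ r ∈ Set.Icc (0:ℝ) R, 0 < u r ∧ u r < α₀) :
    ∀ r ∈ Set.Ioc (0:ℝ) R, deriv u r < 0 :=
  stmt_5_general N hN g α₀ R hgpos u hu heq hbetween
end
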